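/- Let sum_le(n) = Σ_{i=0}^{n} le(i) be the running sum of Leech's word le. Then for every natural number r, sum_le((13^{3r} - 1)/12) = (13^{3r} - 1)/12 + 3r. -/

import Mathlib

/-- The images of the letters 0, 1, 2 under the 13-uniform morphism defining
Leech's word. -/
def leechMorphism : ℕ → List ℕ
  | 0 => [0,1,2,1,0,2,1,2,0,1,2,1,0]
  | 1 => [1,2,0,2,1,0,2,0,1,2,0,2,1]
  | _ => [2,0,1,0,2,1,0,1,2,0,1,0,2]

/-- Leech's word, as the fixed point starting from 0 of the 13-uniform morphism:
`le (13*q + d) = (leechMorphism (le q))[d]`. -/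
def leech : ℕ → ℕ
  | 0 => 0
  | (n+1) => (leechMorphism (leech ((n+1)/13))).getD ((n+1) % 13) 0
decreasing_by exact Nat.div_lt_self (Nat.succ_pos n) (by norm_num)


lemma leech_le (n : ℕ) : leech n ≤ 2 := by
  cases n with
  | zero => simp [leech]
  | succ m =>
    rw [leech]
    rcases h : leech ((m+1)/13) with _|_|k <;> simp [leechMorphism] <;>
      rcases hd : (m+1) % 13 with _|_|_|_|_|_|_|_|_|_|_|_|_|d <;>
      simp [List.getD]

lemma leech_block (q d : ℕ) (hd : d < 13) :
    leech (13*q + d) = (leechMorphism (leech q)).getD d 0 := by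
  rcases Nat.eq_zero_or_pos (13*q+d) with h | h
  · have hq : q = 0 := by omega
    have hd0 : d = 0 := by omega
    subst hq; subst hd0
    simp [leech, leechMorphism]
  · obtain ⟨m, hm⟩ : ∃ m, 13*q + d = m + 1 := ⟨13*q+d-1, by omega⟩
    rw [hm, leech]
    have h1 : (m+1)/13 = q := by omega
    have h2 : (m+1)%13 = d := by omega
    rw [h1, h2]


def cnt (j n : ℕ) : ℕ := ∑ i ∈ Finset.range n, if leech i = j then 1 else 0
def Sl (n : ℕ) : ℕ := ∑ i ∈ Finset.range n, leech i

lemma block_sums (q : ℕ) :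
    (∑ d ∈ Finset.range 13, leech (13*q+d))
        = 12 + (if leech q = 0 then 1 else 0) + 2 * (if leech q = 1 then 1 else 0) ∧
    (∑ d ∈ Finset.range 13, if leech (13*q+d) = 0 then 1 else 0)
        = 4 + (if leech q = 2 then 1 else 0) ∧
    (∑ d ∈ Finset.range 13, if leech (13*q+d) = 1 then 1 else 0)
        = 4 + (if leech q = 0 then 1 else 0) ∧
    (∑ d ∈ Finset.range 13, if leech (13*q+d) = 2 then 1 else 0)
        = 4 + (if leech q = 1 then 1 else 0) := by
  have h := leech_le q
  have e : ∀ d, d < 13 → leech (13*q+d) = (leechMorphism (leech q)).getD d 0 :=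
    fun d hd => leech_block q d hd
  rcases (show leech q = 0 ∨ leech q = 1 ∨ leech q = 2 by omega) with h0 | h0 | h0 <;>
    refine ⟨?_, ?_, ?_, ?_⟩ <;>
    simp only [Finset.sum_range_succ, Finset.sum_range_zero] <;>
    rw [e 0 (by norm_num), e 1 (by norm_num), e 2 (by norm_num), e 3 (by norm_num),
      e 4 (by norm_num), e 5 (by norm_num), e 6 (by norm_num), e 7 (by norm_num),
      e 8 (by norm_num), e 9 (by norm_num), e 10 (by norm_num), e 11 (by norm_num),
      e 12 (by norm_num), h0] <;>
    simp [leechMorphism, List.getD]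

lemma scale (n : ℕ) :
    Sl (13*n) = 12*n + cnt 0 n + 2 * cnt 1 n ∧
    cnt 0 (13*n) = 4*n + cnt 2 n ∧
    cnt 1 (13*n) = 4*n + cnt 0 n ∧
    cnt 2 (13*n) = 4*n + cnt 1 n := by
  induction n with
  | zero => simp [Sl, cnt]
  | succ m ih =>
    obtain ⟨i1, i2, i3, i4⟩ := ih
    obtain ⟨b1, b2, b3, b4⟩ := block_sums m
    have key : ∀ F : ℕ → ℕ, (∑ i ∈ Finset.range (13*m+13), F i)
        = (∑ i ∈ Finset.range (13*m), F i) + ∑ d ∈ Finset.range 13, F (13*m+d) :=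
      fun F => Finset.sum_range_add F (13*m) 13
    have hm : 13*(m+1) = 13*m + 13 := by ring
    have hc : ∀ j, cnt j (m+1) = cnt j m + (if leech m = j then 1 else 0) := by
      intro j; unfold cnt; rw [Finset.sum_range_succ]
    have hS : Sl (m+1) = Sl m + leech m := by
      unfold Sl; rw [Finset.sum_range_succ]
    unfold Sl cnt at i1 ⊢
    unfold cnt at i2 i3 i4
    rw [hm, key leech, key (fun i => if leech i = 0 then 1 else 0),
      key (fun i => if leech i = 1 then 1 else 0),
      key (fun i => if leech i = 2 then 1 else 0), i1, i2, i3, i4, b1, b2, b3, b4]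
    unfold cnt at hc
    rw [hc 0, hc 1, hc 2] at *
    refine ⟨by omega, by omega, by omega, by omega⟩
def Bl : ℕ → ℕ
  | 0 => 0
  | (k+1) => 13 * Bl k + 1

lemma Bl_pow (k : ℕ) : 12 * Bl k + 1 = 13 ^ k := by
  induction k with
  | zero => simp [Bl]
  | succ m ih => rw [pow_succ]; show 12 * (13 * Bl m + 1) + 1 = 13 ^ m * 13; omega

lemma leech_Bl (k : ℕ) : leech (Bl k) = k % 3 := by
  induction k with
  | zero => simp [Bl, leech]
  | succ m ih =>
    show leech (13 * Bl m + 1) = (m+1) % 3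
    rw [leech_block _ 1 (by norm_num), ih]
    rcases (show m % 3 = 0 ∨ m % 3 = 1 ∨ m % 3 = 2 by omega) with h | h | h <;>
      rw [h] <;> simp [leechMorphism, List.getD] <;> try omega

lemma substep (b : ℕ) :
    Sl (13*b+1) = 12*b + cnt 0 b + 2 * cnt 1 b + leech b ∧
    cnt 0 (13*b+1) = 4*b + cnt 2 b + (if leech b = 0 then 1 else 0) ∧
    cnt 1 (13*b+1) = 4*b + cnt 0 b + (if leech b = 1 then 1 else 0) ∧
    cnt 2 (13*b+1) = 4*b + cnt 1 b + (if leech b = 2 then 1 else 0) := by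
  obtain ⟨s1, s2, s3, s4⟩ := scale b
  have hl : leech (13*b) = leech b := by
    have h := leech_le b
    have e := leech_block b 0 (by norm_num)
    rw [Nat.add_zero] at e
    rcases (show leech b = 0 ∨ leech b = 1 ∨ leech b = 2 by omega) with h0 | h0 | h0 <;>
      rw [e, h0] <;> simp [leechMorphism, List.getD]
  refine ⟨?_, ?_, ?_, ?_⟩
  · unfold Sl at *; rw [Finset.sum_range_succ, s1, hl]
  · unfold cnt at *; rw [Finset.sum_range_succ, s2, hl]
  · unfold cnt at *; rw [Finset.sum_range_succ, s3, hl]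
  · unfold cnt at *; rw [Finset.sum_range_succ, s4, hl]

lemma main_inv (r : ℕ) : ∃ c,
    cnt 0 (Bl (3*r)) = c ∧ cnt 1 (Bl (3*r)) = c ∧ cnt 2 (Bl (3*r)) = c + 3*r ∧
    Sl (Bl (3*r)) = Bl (3*r) + 3*r ∧ Bl (3*r) = 3*c + 3*r := by
  induction r with
  | zero => exact ⟨0, by simp [Bl, cnt, Sl]⟩
  | succ m ih =>
    obtain ⟨c, e0, e1, e2, eS, eb⟩ := ih
    have hb1 : Bl (3*m+1) = 13 * Bl (3*m) + 1 := rfl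
    have hb2 : Bl (3*m+2) = 13 * Bl (3*m+1) + 1 := rfl
    have hb3 : Bl (3*m+3) = 13 * Bl (3*m+2) + 1 := rfl
    have l0 : leech (Bl (3*m)) = 0 := by rw [leech_Bl]; omega
    have l1 : leech (Bl (3*m+1)) = 1 := by rw [leech_Bl]; omega
    have l2 : leech (Bl (3*m+2)) = 2 := by rw [leech_Bl]; omega
    obtain ⟨s1, c01, c11, c21⟩ := substep (Bl (3*m))
    obtain ⟨s2, c02, c12, c22⟩ := substep (Bl (3*m+1))
    obtain ⟨s3, c03, c13, c23⟩ := substep (Bl (3*m+2))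
    rw [← hb1] at s1 c01 c11 c21
    rw [← hb2] at s2 c02 c12 c22
    rw [← hb3] at s3 c03 c13 c23
    rw [l0] at s1 c01 c11 c21
    rw [l1] at s2 c02 c12 c22
    rw [l2] at s3 c03 c13 c23
    norm_num at s1 c01 c11 c21 s2 c02 c12 c22 s3 c03 c13 c23
    have h3 : 3*(m+1) = 3*m+3 := by ring
    rw [h3]
    exact ⟨4*Bl (3*m+2) + 4*Bl (3*m+1) + 4*Bl (3*m) + c,
      by omega, by omega, by omega, by omega, by omega⟩

theorem sum_leech (r : ℕ) :
    12 * (∑ i ∈ Finset.range ((13^(3*r) - 1)/12 + 1), leech i) =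
      (13^(3*r) - 1) + 36*r := by
  have hp : 12 * Bl (3*r) + 1 = 13 ^ (3*r) := Bl_pow _
  have h1 : (13^(3*r) - 1)/12 = Bl (3*r) := by omega
  rw [h1, Finset.sum_range_succ]
  have l0 : leech (Bl (3*r)) = 0 := by rw [leech_Bl]; omega
  obtain ⟨c, e0, e1, e2, eS, eb⟩ := main_inv r
  have hS : (∑ i ∈ Finset.range (Bl (3*r)), leech i) = Sl (Bl (3*r)) := rfl
  rw [hS, l0, eS]
  omega
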